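/- arXiv:2111.08765 — 5 statements merged into one kernel-verified Lean document; each statement's English description precedes it below -/
import Mathlib

section
/- Let A be a 2×2 integer matrix with determinant 1 (an element of SL(2,ℤ)). Let v = (p,q) and w = (p',q') be primitive vectors in ℤ² (i.e., gcd(p,q) = 1 and gcd(p',q') = 1). Suppose A·v = v or A·v = −v, and A·w = w or A·w = −w. Then A = I, or A = −I, or v and w determine the same slope, i.e., p·q' = p'·q. -/
/-!
If the two slopes differ, `v` and `w` are the rows of a matrix `N` with `det N ≠ 0`. Writing
`A v = ε v` and `A w = δ w`, taking determinants gives `ε δ det N = det A det N = det N`, so the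
two signs agree; then `A` acts as the scalar `ε` on two independent vectors, and cancelling
`N` (via its adjugate) gives `A = ε I`.
-/

namespace Matrix

variable {n R : Type*} [Fintype n] [CommRing R]

lemma mul_transpose_of_mulVec_row_eq_smul (A N : Matrix n n R) (a : n → R)
    (h : ∀ i, A *ᵥ N i = a i • N i) : N * Aᵀ = of fun i j => a i * N i j := by
  ext i j
  rw [mul_apply_eq_vecMul, vecMul_transpose, h]
  rfl

lemma prod_eq_det_of_mulVec_row_eq_smul [DecidableEq n] [IsDomain R] {A N : Matrix n n R}
    {a : n → R} (hN : N.det ≠ 0) (h : ∀ i, A *ᵥ N i = a i • N i) : ∏ i, a i = A.det := by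
  have hdet := congrArg det (mul_transpose_of_mulVec_row_eq_smul A N a h)
  rw [det_mul, det_transpose, det_mul_column, mul_comm] at hdet
  exact (mul_right_cancel₀ hN hdet).symm

lemma eq_smul_one_of_mulVec_row_eq_smul [DecidableEq n] [IsDomain R] {A N : Matrix n n R}
    {c : R} (hN : N.det ≠ 0) (h : ∀ i, A *ᵥ N i = c • N i) : A = c • 1 := by
  have hNA : N * Aᵀ = c • N := mul_transpose_of_mulVec_row_eq_smul A N (fun _ => c) h
  have hdet_smul : N.det • Aᵀ = N.det • (c • 1 : Matrix n n R) :=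
    calc N.det • Aᵀ = N.adjugate * (N * Aᵀ) := by
          rw [← Matrix.mul_assoc, adjugate_mul, smul_mul, one_mul]
      _ = N.det • (c • 1 : Matrix n n R) := by
          rw [hNA, mul_smul_comm, adjugate_mul, smul_comm]
  rw [← transpose_transpose A, smul_right_injective _ hN hdet_smul, transpose_smul,
    transpose_one]

end Matrix

lemma Int.exists_unit_smul_of_eq_or_eq_neg {M : Type*} [AddCommGroup M] {x y : M}
    (h : x = y ∨ x = -y) : ∃ u : ℤˣ, x = u • y := by
  rcases h with h | h
  · exact ⟨1, by simp [h]⟩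
  · exact ⟨-1, by simp [h]⟩

theorem sl2_fixes_two_slopes_general (A : Matrix (Fin 2) (Fin 2) ℤ)
    (hA : A.det = 1) (p q p' q' : ℤ)
    (h1 : A.mulVec ![p, q] = ![p, q] ∨ A.mulVec ![p, q] = -![p, q])
    (h2 : A.mulVec ![p', q'] = ![p', q'] ∨ A.mulVec ![p', q'] = -![p', q']) :
    A = 1 ∨ A = -1 ∨ p * q' = p' * q := by
  rcases eq_or_ne (p * q') (p' * q) with hslope | hslope
  · exact Or.inr (Or.inr hslope)
  set N := Matrix.of ![![p, q], ![p', q']]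
  have hN : N.det ≠ 0 := by
    rw [Matrix.det_fin_two_of]
    exact sub_ne_zero.mpr (by rwa [mul_comm q])
  obtain ⟨ε, hε⟩ := Int.exists_unit_smul_of_eq_or_eq_neg h1
  obtain ⟨δ, hδ⟩ := Int.exists_unit_smul_of_eq_or_eq_neg h2
  have hεδ : ε * δ = 1 := by
    have := Matrix.prod_eq_det_of_mulVec_row_eq_smul (a := ![(ε : ℤ), δ]) hN
      (Fin.forall_fin_two.mpr ⟨hε, hδ⟩)
    exact Units.val_eq_one.mp (by simpa [hA] using this)
  have hδε : δ = ε := by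
    rw [← Int.units_inv_eq_self ε, eq_inv_iff_mul_eq_one, mul_comm, hεδ]
  have hscalar : A = (ε : ℤ) • 1 :=
    Matrix.eq_smul_one_of_mulVec_row_eq_smul hN (Fin.forall_fin_two.mpr ⟨hε, hδε ▸ hδ⟩)
  rcases Int.units_eq_one_or ε with rfl | rfl <;> simp [hscalar]

/-- If `A ∈ SL(2,ℤ)` sends each of two primitive vectors `(p,q)` and `(p',q')`
to plus or minus itself, then `A = I`, or `A = -I`, or the two vectors
determine the same slope, i.e. `p*q' = p'*q`. -/
theorem sl2_fixes_two_slopes (A : Matrix (Fin 2) (Fin 2) ℤ)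
    (hA : A.det = 1) (p q p' q' : ℤ)
    (hv : IsCoprime p q) (hw : IsCoprime p' q')
    (h1 : A.mulVec ![p, q] = ![p, q] ∨ A.mulVec ![p, q] = -![p, q])
    (h2 : A.mulVec ![p', q'] = ![p', q'] ∨ A.mulVec ![p', q'] = -![p', q']) :
    A = 1 ∨ A = -1 ∨ p * q' = p' * q :=
  sl2_fixes_two_slopes_general A hA p q p' q' h1 h2
end

section
/- Let φ be the 2×2 integer matrix with rows (1, 0) and (1, −1), and ψ the 2×2 integer matrix with rows (1, 0) and (−1, −1); note φ is its own inverse. Let A be a 2×2 integer matrix with determinant 1 and let p, q be integers. If A·(p, q)ᵀ = (p, q)ᵀ and (ψ·A·φ)·(−p, q)ᵀ = (−p, q)ᵀ, then p = 0. -/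
/-!
Gluing the two fixed-vector conditions shows that `A` sends `(0, -p)` to `(0, p)`: the second
condition says `A φ (-p, q) = ψ (-p, q)` because `ψ` is an involution, and adding `A (p, q) = (p, q)`
leaves `A (0, -p) = -(0, -p)`. So `A` fixes `(p, q)` and negates `(0, -p)`; if `p ≠ 0` these form a
basis, forcing `det A = -1`.
-/

open Matrix

namespace Matrix

variable {R : Type*} [CommRing R]

theorem mulVec_comp_eq_of_conj_mulVec_eq {n : Type*} [Fintype n] [DecidableEq n]
    {ψ A φ : Matrix n n R} (hψ : ψ * ψ = 1) {x : n → R} (h : (ψ * A * φ) *ᵥ x = x) :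
    A *ᵥ (φ *ᵥ x) = ψ *ᵥ x := by
  conv_rhs => rw [← h]
  rw [mulVec_mulVec, mulVec_mulVec, ← Matrix.mul_assoc, ← Matrix.mul_assoc, hψ, Matrix.one_mul]

theorem det_mul_det_eq_neg_of_mulVec_eq_of_mulVec_eq_neg {A : Matrix (Fin 2) (Fin 2) R}
    {v w : Fin 2 → R} (hv : A *ᵥ v = v) (hw : A *ᵥ w = -w) :
    A.det * (of ![v, w]).det = -(of ![v, w]).det := by
  have hrows : of ![v, w] * Aᵀ = of ![v, -w] := by
    ext i j
    fin_cases i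
    · simpa [mul_apply, mulVec, dotProduct, mul_comm] using congrFun hv j
    · simpa [mul_apply, mulVec, dotProduct, mul_comm] using congrFun hw j
  have := congrArg det hrows
  rw [det_mul, det_transpose] at this
  rw [mul_comm, this, det_fin_two, det_fin_two]
  simp only [of_apply, cons_val_zero, cons_val_one, Pi.neg_apply]
  ring

end Matrix

/-- With gluing matrices `φ = !![1,0;1,-1]` and `ψ = !![1,0;-1,-1]` (and `φ⁻¹ = φ`),
if a determinant-one integer matrix `A` fixes `(p,q)` and `ψ·A·φ` fixes `(-p,q)`,
then `p = 0`. -/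
theorem longitude_fixed_case (A : Matrix (Fin 2) (Fin 2) ℤ) (hA : A.det = 1)
    (p q : ℤ)
    (h1 : A.mulVec ![p, q] = ![p, q])
    (h2 : ((!![1, 0; -1, -1] : Matrix (Fin 2) (Fin 2) ℤ) * A *
        (!![1, 0; 1, -1] : Matrix (Fin 2) (Fin 2) ℤ)).mulVec ![-p, q] = ![-p, q]) :
    p = 0 := by
  have hψ : (!![1, 0; -1, -1] : Matrix (Fin 2) (Fin 2) ℤ) * !![1, 0; -1, -1] = 1 := by
    simp [one_fin_two]
  have h2' := mulVec_comp_eq_of_conj_mulVec_eq hψ h2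
  have hneg : A *ᵥ ![0, -p] = -![0, -p] := by
    have := congrArg₂ (· + ·) h1 h2'
    simp only [← mulVec_add] at this
    convert this using 1 <;> ext i <;> fin_cases i <;> simp [mulVec, dotProduct]
  have hdet := det_mul_det_eq_neg_of_mulVec_eq_of_mulVec_eq_neg h1 hneg
  rw [hA, det_fin_two_of] at hdet
  exact pow_eq_zero_iff two_ne_zero |>.mp (by linarith)
end

section
/- Let φ be the 2×2 integer matrix with rows (1, 0) and (1, −1), and ψ the 2×2 integer matrix with rows (1, 0) and (−1, −1); note φ is its own inverse. Let A be a 2×2 integer matrix with entries a, b (first row) and c, d (second row), with determinant 1, and let p, q be integers. If A·(p, q)ᵀ = −(p, q)ᵀ and (ψ·A·φ)·(−p, q)ᵀ = (−p, q)ᵀ, then either p = 0 or the matrix A is completely determined up to the parameter a: b = 2, d = −(a + 2), and 2·c = −(a + 1)² (in particular a is odd). -/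
/-!
Comparing first coordinates of `A (p, q) = -(p, q)` and `ψ A φ (-p, q) = (-p, q)` gives
`b p = 2 p`; the second coordinates then give `(a + d + 2) p = 0`. So for `p ≠ 0` the
entries `b` and `d` are forced, and `det A = 1` determines `c`.
-/

open Matrix

theorem Matrix.mulVec_fin_two_of {R : Type*} [NonUnitalNonAssocSemiring R] (a b c d x y : R) :
    !![a, b; c, d] *ᵥ ![x, y] = ![a * x + b * y, c * x + d * y] := by
  ext i; fin_cases i <;> simp [mulVec]

theorem Matrix.vec2_eq_iff {α : Type*} {a₀ a₁ b₀ b₁ : α} :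
    ![a₀, a₁] = ![b₀, b₁] ↔ a₀ = b₀ ∧ a₁ = b₁ := by
  simp [vecCons_inj]

theorem psi_mul_mul_phi {R : Type*} [Ring R] (a b c d : R) :
    !![1, 0; -1, -1] * !![a, b; c, d] * !![1, 0; 1, -1] =
      !![a + b, -b; -(a + b + c + d), b + d] := by
  simp only [mul_fin_two]
  ext i j; fin_cases i <;> fin_cases j <;> simp <;> abel

theorem entries_of_negates_and_fixes {R : Type*} [CommRing R] [NoZeroDivisors R]
    {a b c d p q : R} (hp : p ≠ 0) (hdet : a * d - b * c = 1)
    (h₁ : a * p + b * q = -p) (h₂ : c * p + d * q = -q)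
    (h₃ : (a + b) * -p + -b * q = -p) (h₄ : -(a + b + c + d) * -p + (b + d) * q = q) :
    b = 2 ∧ d = -(a + 2) ∧ 2 * c = -(a + 1) ^ 2 := by
  have hb : b = 2 := mul_right_cancel₀ hp (by linear_combination -(h₁ + h₃))
  subst hb
  have hd : d = -(a + 2) := by
    refine eq_neg_of_add_eq_zero_left (mul_right_cancel₀ hp ?_)
    linear_combination h₄ - h₂
  subst hd
  exact ⟨rfl, rfl, by linear_combination -hdet⟩

/-- With gluing matrices `φ = !![1,0;1,-1]` and `ψ = !![1,0;-1,-1]` (and `φ⁻¹ = φ`),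
if a determinant-one integer matrix `A = !![a,b;c,d]` sends `(p,q)` to `-(p,q)` and
`ψ·A·φ` fixes `(-p,q)`, then either `p = 0` or `b = 2`, `d = -(a+2)`, and
`2*c = -(a+1)^2` (so `a` is odd). -/
theorem longitude_negated_case (a b c d p q : ℤ)
    (hA : (!![a, b; c, d] : Matrix (Fin 2) (Fin 2) ℤ).det = 1)
    (h1 : (!![a, b; c, d] : Matrix (Fin 2) (Fin 2) ℤ).mulVec ![p, q] = -![p, q])
    (h2 : ((!![1, 0; -1, -1] : Matrix (Fin 2) (Fin 2) ℤ) *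
        (!![a, b; c, d] : Matrix (Fin 2) (Fin 2) ℤ) *
        (!![1, 0; 1, -1] : Matrix (Fin 2) (Fin 2) ℤ)).mulVec ![-p, q] = ![-p, q]) :
    p = 0 ∨ (b = 2 ∧ d = -(a + 2) ∧ 2 * c = -(a + 1) ^ 2) := by
  rw [det_fin_two_of] at hA
  rw [mulVec_fin_two_of, neg_cons, neg_cons, neg_empty, vec2_eq_iff] at h1
  rw [psi_mul_mul_phi, mulVec_fin_two_of, vec2_eq_iff] at h2
  rcases eq_or_ne p 0 with hp | hp
  · exact Or.inl hp
  · exact Or.inr (entries_of_negates_and_fixes hp hA h1.1 h1.2 h2.1 h2.2)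
end

section
/- Let φ be the 2×2 integer matrix with rows (1, 0) and (1, −1), and ψ the 2×2 integer matrix with rows (1, 0) and (−1, −1); note φ is its own inverse. Let A be a 2×2 integer matrix with determinant 1 and let p, q be integers with p ≠ 0. If A·(p, q)ᵀ = −(p, q)ᵀ and (ψ·A·φ)·(−p, q)ᵀ = (−p, q)ᵀ, then A has infinite order: A^n is not the identity matrix for any integer n ≥ 1. -/
/-!
The two eigenvector conditions with `p ≠ 0` force `A 0 1 = 2` and `tr A = -2`. Together with
`det A = 1`, Cayley–Hamilton gives `(A + 1)² = 0`, so `A = -(1 - N)` with `N = A + 1` nonzero and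
square-zero. Then `A ^ n = (-1) ^ n • (1 - n • N)`, whose `(0, 1)` entry `∓2n` vanishes only for
`n = 0`.
-/

theorem pow_eq_neg_one_pow_smul_of_sq_add_one_eq_zero {R : Type*} [Ring R] {x : R}
    (hx : (x + 1) ^ 2 = 0) (n : ℕ) : x ^ n = (-1 : ℤ) ^ n • (1 - n • (x + 1)) := by
  obtain ⟨N, rfl⟩ : ∃ N, x = N - 1 := ⟨x + 1, by abel⟩
  rw [sub_add_cancel, sq] at hx
  rw [sub_add_cancel]
  induction n with
  | zero => simp
  | succ n ih =>
    have step : (1 - n • N) * (N - 1) = -(1 - (n + 1) • N) := by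
      calc (1 - n • N) * (N - 1) = N - n • (N * N) - 1 + n • N := by noncomm_ring
        _ = -(1 - (n + 1) • N) := by rw [hx, smul_zero, add_smul, one_smul]; abel
    rw [pow_succ, ih, smul_mul_assoc, step, pow_succ, mul_neg_one, smul_neg, neg_smul]

namespace Matrix

variable {R : Type*} [CommRing R]

theorem sq_add_one_eq_zero_of_trace_of_det {A : Matrix (Fin 2) (Fin 2) R}
    (htr : A.trace = -2) (hdet : A.det = 1) : (A + 1) ^ 2 = 0 := by
  rw [trace_fin_two] at htr
  rw [det_fin_two] at hdet
  ext i j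
  fin_cases i <;> fin_cases j <;>
    simp only [Fin.zero_eta, Fin.isValue, Fin.mk_one, sq, mul_apply, add_apply, one_apply,
      Fin.sum_univ_two, ↓reduceIte, zero_ne_one, one_ne_zero, add_zero, zero_apply]
  · linear_combination A 0 0 * htr - hdet
  · linear_combination A 0 1 * htr
  · linear_combination A 1 0 * htr
  · linear_combination A 1 1 * htr - hdet

theorem apply_zero_one_eq_two_and_trace_eq_neg_two [NoZeroDivisors R]
    {A : Matrix (Fin 2) (Fin 2) R} {p q : R} (hp : p ≠ 0)
    (h1 : A *ᵥ ![p, q] = -![p, q])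
    (h2 : (!![1, 0; -1, -1] * A * !![1, 0; 1, -1]) *ᵥ ![-p, q] = ![-p, q]) :
    A 0 1 = 2 ∧ A.trace = -2 := by
  have e10 := congrFun h1 0
  have e11 := congrFun h1 1
  have e20 := congrFun h2 0
  have e21 := congrFun h2 1
  simp only [mulVec, dotProduct, Fin.sum_univ_two, mul_apply, of_apply, cons_val', cons_val_zero,
    cons_val_one, Pi.neg_apply, empty_val', cons_val_fin_one] at e10 e11 e20 e21
  have hb : A 0 1 = 2 := mul_right_cancel₀ hp (by linear_combination -e10 - e20)
  refine ⟨hb, mul_right_cancel₀ hp ?_⟩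
  rw [trace_fin_two]
  linear_combination e21 - e11 - (p + q) * hb

end Matrix

/-- With gluing matrices `φ = !![1,0;1,-1]` and `ψ = !![1,0;-1,-1]` (and `φ⁻¹ = φ`),
if a determinant-one integer matrix `A` sends `(p,q)` to `-(p,q)` with `p ≠ 0` and
`ψ·A·φ` fixes `(-p,q)`, then `A` has infinite order: `A^n ≠ 1` for all `n ≥ 1`. -/
theorem longitude_negated_infinite_order (A : Matrix (Fin 2) (Fin 2) ℤ)
    (hA : A.det = 1) (p q : ℤ) (hp : p ≠ 0)
    (h1 : A.mulVec ![p, q] = -![p, q])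
    (h2 : ((!![1, 0; -1, -1] : Matrix (Fin 2) (Fin 2) ℤ) * A *
        (!![1, 0; 1, -1] : Matrix (Fin 2) (Fin 2) ℤ)).mulVec ![-p, q] = ![-p, q]) :
    ∀ n : ℕ, 1 ≤ n → A ^ n ≠ 1 := by
  intro n hn hAn
  obtain ⟨hb, htr⟩ := Matrix.apply_zero_one_eq_two_and_trace_eq_neg_two hp h1 h2
  have hpow := pow_eq_neg_one_pow_smul_of_sq_add_one_eq_zero
    (Matrix.sq_add_one_eq_zero_of_trace_of_det htr hA) n
  have h01 := congrFun (congrFun hpow 0) 1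
  rw [hAn] at h01
  simp only [Matrix.smul_apply, Matrix.sub_apply, Matrix.add_apply,
    Matrix.one_apply_ne zero_ne_one, hb] at h01
  have hn0 : n = 0 := by simpa using h01
  omega
end

section
/- Let φ be the 2×2 integer matrix with rows (1, 0) and (1, −1), and ψ the 2×2 integer matrix with rows (1, 0) and (−1, −1); note φ is its own inverse. Let A be a 2×2 integer matrix with determinant −1 and let p, q be integers. If (ψ·A)·(p, q)ᵀ = (−p, q)ᵀ and (A·φ)·(−p, q)ᵀ = (p, q)ᵀ, then p = 0. -/
/-!
Since `ψ = !![1, 0; -1, -1]` is an involution, the two conditions say `A (p, q) = (-p, p - q)` and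
`A (p, p + q) = (-p, -q)`; subtracting, `A (0, p) = (0, -p)`. If `p ≠ 0`, then `(0, 1)` is an
eigenvector of `A` for `-1`, so `det A = -A₀₀` forces `A₀₀ = 1`, and also `A₀₁ = 0`; the first
coordinate of `A (p, q) = (-p, p - q)` then reads `p = -p`.
-/

open Matrix

theorem psi_mul_self {R : Type*} [Ring R] :
    (!![1, 0; -1, -1] : Matrix (Fin 2) (Fin 2) R) * !![1, 0; -1, -1] = 1 := by
  rw [one_fin_two]
  simp

theorem Matrix.det_fin_two_of_mulVec_eq_neg {R : Type*} [CommRing R]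
    {A : Matrix (Fin 2) (Fin 2) R} (h : A *ᵥ ![0, 1] = -![0, 1]) : A.det = -A 0 0 := by
  have h0 := congrFun h 0
  have h1 := congrFun h 1
  simp [mulVec_fin_two] at h0 h1
  rw [det_fin_two, h0, h1]
  ring

/-- With gluing matrices `φ = !![1,0;1,-1]` and `ψ = !![1,0;-1,-1]` (and `φ⁻¹ = φ`),
if a determinant `-1` integer matrix `A` satisfies `ψ·A·(p,q)ᵀ = (-p,q)ᵀ` and
`A·φ·(-p,q)ᵀ = (p,q)ᵀ`, then `p = 0`. -/
theorem longitude_swapped_case (A : Matrix (Fin 2) (Fin 2) ℤ) (hA : A.det = -1)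
    (p q : ℤ)
    (h1 : ((!![1, 0; -1, -1] : Matrix (Fin 2) (Fin 2) ℤ) * A).mulVec ![p, q] = ![-p, q])
    (h2 : (A * (!![1, 0; 1, -1] : Matrix (Fin 2) (Fin 2) ℤ)).mulVec ![-p, q] = ![p, q]) :
    p = 0 := by
  by_contra hp
  have hv : A *ᵥ ![p, q] = ![-p, p - q] := by
    have := congrArg (!![1, 0; -1, -1] *ᵥ ·) h1
    simp only [mulVec_mulVec, ← mul_assoc, psi_mul_self, one_mul] at this
    rw [this]
    ext i; fin_cases i <;> simp; ring
  have hw : A *ᵥ ![p, p + q] = ![-p, -q] := by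
    have hφ : !![1, 0; 1, -1] *ᵥ ![-p, q] = -![p, p + q] := by
      ext i; fin_cases i <;> simp; ring
    rw [← mulVec_mulVec, hφ, mulVec_neg, neg_eq_iff_eq_neg] at h2
    simpa using h2
  have hcol : A *ᵥ ![0, 1] = -![0, 1] := by
    refine smul_right_injective _ hp ?_
    calc p • (A *ᵥ ![0, 1]) = A *ᵥ (![p, p + q] - ![p, q]) := by
          rw [← mulVec_smul]; congr 1; ext i; fin_cases i <;> simp
      _ = p • -![0, 1] := by
          rw [mulVec_sub, hw, hv]; ext i; fin_cases i <;> simp; ring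
  have ha : A 0 0 = 1 := by linarith [det_fin_two_of_mulVec_eq_neg hcol]
  have hb : A 0 1 = 0 := by simpa [mulVec_fin_two] using congrFun hcol 0
  have hfirst := congrFun hv 0
  simp [mulVec_fin_two, ha, hb] at hfirst
  omega
end
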